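/- arXiv:1302.1349 — 2 statements merged into one kernel-verified Lean document; each statement's English description precedes it below -/
import Mathlib

section
/- Let (P̂₁,P̂₂) ∈ Ω and (P̆₁,P̆₂) ∈ Ω, and let t^{j−1} < t* < t^j be real numbers. Set α = (t* − t^{j−1})/(t^j − t^{j−1}) and (P̄₁,P̄₂) = α·(P̂₁,P̂₂) + (1−α)·(P̆₁,P̆₂). Then (P̄₁,P̄₂) ∈ Ω and (t* − t^{j−1})·min{C̃₁(P̂₁,P̂₂), C̃₂(P̂₁)} + (t^j − t*)·min{C̃₁(P̆₁,P̆₂), C̃₂(P̆₁)} ≤ (t^j − t^{j−1})·min{C̃₁(P̄₁,P̄₂), C̃₂(P̄₁)}, while the total energies consumed by the source and by the relay over the interval [t^{j−1}, t^j] are unchanged: (t* − t^{j−1})·P̂₁ + (t^j − t*)·P̆₁ = (t^j − t^{j−1})·P̄₁ and similarly for the second coordinate. Consequently, in an optimal policy the transmit rates and powers of the source and relay are constant within every energy-harvesting epoch and can only change at energy-harvesting instants. -/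
/-- `C(x) = (1/2) log(1+x)` (natural logarithm). -/
noncomputable def Cfun (x : ℝ) : ℝ := Real.log (1 + x) / 2

/-- `C̃₁(P₁,P₂) = C((√(a²P₁ − b²P₂) + b√((a²−1)P₂))² / (a²N))`. -/
noncomputable def Ct1 (a b N P1 P2 : ℝ) : ℝ :=
  Cfun ((Real.sqrt (a ^ 2 * P1 - b ^ 2 * P2) + b * Real.sqrt ((a ^ 2 - 1) * P2)) ^ 2
    / (a ^ 2 * N))

/-- `C̃₂(P₁) = C(max{1,a²} P₁ / N)`. -/
noncomputable def Ct2 (a N P1 : ℝ) : ℝ := Cfun (max 1 (a ^ 2) * P1 / N)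

/-- `Cfun` is nondecreasing on nonneg reals. -/
lemma cfun_mono {x y : ℝ} (hx : 0 ≤ x) (hxy : x ≤ y) : Cfun x ≤ Cfun y := by
  unfold Cfun
  have h := Real.log_le_log (show (0:ℝ) < 1 + x by linarith) (show 1 + x ≤ 1 + y by linarith)
  linarith

/-- `Cfun` is concave on nonneg reals. -/
lemma cfun_concave {x y α β : ℝ} (hx : 0 ≤ x) (hy : 0 ≤ y) (hα : 0 ≤ α) (hβ : 0 ≤ β)
    (hs : α + β = 1) : α * Cfun x + β * Cfun y ≤ Cfun (α * x + β * y) := by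
  have h := strictConcaveOn_log_Ioi.concaveOn.2
    (x := 1 + x) (y := 1 + y)
    (by simp [Set.mem_Ioi]; linarith) (by simp [Set.mem_Ioi]; linarith) hα hβ hs
  simp only [smul_eq_mul] at h
  have he : α * (1 + x) + β * (1 + y) = 1 + (α * x + β * y) := by nlinarith
  rw [he] at h
  unfold Cfun
  linarith

/-- Concavity of the geometric mean (Cauchy–Schwarz). -/
lemma gm_concave {u1 v1 u2 v2 α β : ℝ} (hu1 : 0 ≤ u1) (hv1 : 0 ≤ v1) (hu2 : 0 ≤ u2)
    (hv2 : 0 ≤ v2) (hα : 0 ≤ α) (hβ : 0 ≤ β) :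
    α * Real.sqrt (u1 * v1) + β * Real.sqrt (u2 * v2)
      ≤ Real.sqrt ((α * u1 + β * u2) * (α * v1 + β * v2)) := by
  have hL : 0 ≤ α * Real.sqrt (u1 * v1) + β * Real.sqrt (u2 * v2) := by positivity
  have hR : 0 ≤ (α * u1 + β * u2) * (α * v1 + β * v2) := by positivity
  rw [Real.le_sqrt hL hR]
  have e1 : Real.sqrt (u1 * v1) ^ 2 = u1 * v1 := Real.sq_sqrt (by positivity)
  have e2 : Real.sqrt (u2 * v2) ^ 2 = u2 * v2 := Real.sq_sqrt (by positivity)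
  have key : 2 * Real.sqrt (u1 * v1) * Real.sqrt (u2 * v2) ≤ u1 * v2 + u2 * v1 := by
    have e3 : Real.sqrt (u1 * v1) * Real.sqrt (u2 * v2)
        = Real.sqrt (u1 * v2) * Real.sqrt (u2 * v1) := by
      rw [← Real.sqrt_mul (by positivity), ← Real.sqrt_mul (by positivity)]
      ring_nf
    have h4 := two_mul_le_add_sq (Real.sqrt (u1 * v2)) (Real.sqrt (u2 * v1))
    rw [Real.sq_sqrt (by positivity), Real.sq_sqrt (by positivity)] at h4
    calc 2 * Real.sqrt (u1 * v1) * Real.sqrt (u2 * v2)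
        = 2 * Real.sqrt (u1 * v2) * Real.sqrt (u2 * v1) := by rw [mul_assoc, e3, mul_assoc]
      _ ≤ u1 * v2 + u2 * v1 := h4
  have h5 : α * β * (2 * Real.sqrt (u1 * v1) * Real.sqrt (u2 * v2))
      ≤ α * β * (u1 * v2 + u2 * v1) := mul_le_mul_of_nonneg_left key (mul_nonneg hα hβ)
  calc (α * Real.sqrt (u1 * v1) + β * Real.sqrt (u2 * v2)) ^ 2
      = α ^ 2 * Real.sqrt (u1 * v1) ^ 2 + β ^ 2 * Real.sqrt (u2 * v2) ^ 2
        + α * β * (2 * Real.sqrt (u1 * v1) * Real.sqrt (u2 * v2)) := by ring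
    _ ≤ α ^ 2 * Real.sqrt (u1 * v1) ^ 2 + β ^ 2 * Real.sqrt (u2 * v2) ^ 2
        + α * β * (u1 * v2 + u2 * v1) := by linarith
    _ = α ^ 2 * (u1 * v1) + β ^ 2 * (u2 * v2) + α * β * (u1 * v2 + u2 * v1) := by
        rw [e1, e2]
    _ = (α * u1 + β * u2) * (α * v1 + β * v2) := by ring

lemma sq_expand {u w b : ℝ} (hu : 0 ≤ u) (hw : 0 ≤ w) (hb : 0 ≤ b) :
    (Real.sqrt u + b * Real.sqrt w) ^ 2
      = u + b ^ 2 * w + 2 * Real.sqrt (u * (b ^ 2 * w)) := by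
  have h1 : Real.sqrt (u * (b ^ 2 * w)) = Real.sqrt u * (b * Real.sqrt w) := by
    rw [Real.sqrt_mul hu, Real.sqrt_mul (by positivity : (0:ℝ) ≤ b ^ 2),
      Real.sqrt_sq hb]
  rw [h1]
  have e1 : Real.sqrt u ^ 2 = u := Real.sq_sqrt hu
  have e2 : Real.sqrt w ^ 2 = w := Real.sq_sqrt hw
  nlinarith [e1, e2]

/-- Rewriting of `Ct1` in terms of the two linear forms and their geometric mean. -/
lemma ct1_eq {a b N P1 P2 : ℝ} (hb : 0 ≤ b) (hu : 0 ≤ a ^ 2 * P1 - b ^ 2 * P2)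
    (hw : 0 ≤ (a ^ 2 - 1) * P2) :
    Ct1 a b N P1 P2 = Cfun ((a ^ 2 * P1 - b ^ 2 * P2 + b ^ 2 * ((a ^ 2 - 1) * P2)
      + 2 * Real.sqrt ((a ^ 2 * P1 - b ^ 2 * P2) * (b ^ 2 * ((a ^ 2 - 1) * P2))))
        / (a ^ 2 * N)) := by
  unfold Ct1
  rw [sq_expand hu hw hb]

/-- Concavity of the argument `(u+v+2√(uv))/D` in `(u,v)`. -/
lemma ct1arg_concave {u1 v1 u2 v2 α D : ℝ} (hu1 : 0 ≤ u1) (hv1 : 0 ≤ v1) (hu2 : 0 ≤ u2)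
    (hv2 : 0 ≤ v2) (hα : 0 ≤ α) (hβ : 0 ≤ 1 - α) (hD : 0 < D) :
    α * ((u1 + v1 + 2 * Real.sqrt (u1 * v1)) / D)
      + (1 - α) * ((u2 + v2 + 2 * Real.sqrt (u2 * v2)) / D)
    ≤ ((α * u1 + (1 - α) * u2) + (α * v1 + (1 - α) * v2)
      + 2 * Real.sqrt ((α * u1 + (1 - α) * u2) * (α * v1 + (1 - α) * v2))) / D := by
  have hgm := gm_concave hu1 hv1 hu2 hv2 hα hβ
  have he : α * ((u1 + v1 + 2 * Real.sqrt (u1 * v1)) / D)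
      + (1 - α) * ((u2 + v2 + 2 * Real.sqrt (u2 * v2)) / D)
      = (α * (u1 + v1 + 2 * Real.sqrt (u1 * v1))
        + (1 - α) * (u2 + v2 + 2 * Real.sqrt (u2 * v2))) / D := by ring
  rw [he]
  apply div_le_div_of_nonneg_right ?_ hD.le
  linarith

/-- Concavity of `Ct1` on `Ω`. -/
lemma ct1_concave {a b N P1h P2h P1v P2v α : ℝ} (ha : 1 < a) (hb : 0 < b) (hN : 0 < N)
    (hP2h : 0 ≤ P2h) (hP2v : 0 ≤ P2v)
    (hΩh : b ^ 2 * P2h ≤ a ^ 2 * P1h) (hΩv : b ^ 2 * P2v ≤ a ^ 2 * P1v)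
    (hα : 0 ≤ α) (hβ : 0 ≤ 1 - α) :
    α * Ct1 a b N P1h P2h + (1 - α) * Ct1 a b N P1v P2v
      ≤ Ct1 a b N (α * P1h + (1 - α) * P1v) (α * P2h + (1 - α) * P2v) := by
  have ha1 : (0:ℝ) < a ^ 2 - 1 := by nlinarith
  have haN : (0:ℝ) < a ^ 2 * N := by positivity
  have hu1 : 0 ≤ a ^ 2 * P1h - b ^ 2 * P2h := by linarith
  have hu2 : 0 ≤ a ^ 2 * P1v - b ^ 2 * P2v := by linarith
  have hw1 : 0 ≤ (a ^ 2 - 1) * P2h := by positivity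
  have hw2 : 0 ≤ (a ^ 2 - 1) * P2v := by positivity
  have hv1 : 0 ≤ b ^ 2 * ((a ^ 2 - 1) * P2h) := by positivity
  have hv2 : 0 ≤ b ^ 2 * ((a ^ 2 - 1) * P2v) := by positivity
  have hub : 0 ≤ a ^ 2 * (α * P1h + (1 - α) * P1v) - b ^ 2 * (α * P2h + (1 - α) * P2v) := by
    nlinarith
  have hwb : 0 ≤ (a ^ 2 - 1) * (α * P2h + (1 - α) * P2v) :=
    mul_nonneg ha1.le (add_nonneg (mul_nonneg hα hP2h) (mul_nonneg hβ hP2v))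
  rw [ct1_eq hb.le hu1 hw1, ct1_eq hb.le hu2 hw2, ct1_eq hb.le hub hwb]
  have e_u : a ^ 2 * (α * P1h + (1 - α) * P1v) - b ^ 2 * (α * P2h + (1 - α) * P2v)
      = α * (a ^ 2 * P1h - b ^ 2 * P2h) + (1 - α) * (a ^ 2 * P1v - b ^ 2 * P2v) := by ring
  have e_v : b ^ 2 * ((a ^ 2 - 1) * (α * P2h + (1 - α) * P2v))
      = α * (b ^ 2 * ((a ^ 2 - 1) * P2h)) + (1 - α) * (b ^ 2 * ((a ^ 2 - 1) * P2v)) := by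
    ring
  rw [e_u, e_v]
  have hx1 : 0 ≤ (a ^ 2 * P1h - b ^ 2 * P2h + b ^ 2 * ((a ^ 2 - 1) * P2h)
      + 2 * Real.sqrt ((a ^ 2 * P1h - b ^ 2 * P2h) * (b ^ 2 * ((a ^ 2 - 1) * P2h))))
        / (a ^ 2 * N) :=
    div_nonneg (by positivity) haN.le
  have hx2 : 0 ≤ (a ^ 2 * P1v - b ^ 2 * P2v + b ^ 2 * ((a ^ 2 - 1) * P2v)
      + 2 * Real.sqrt ((a ^ 2 * P1v - b ^ 2 * P2v) * (b ^ 2 * ((a ^ 2 - 1) * P2v))))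
        / (a ^ 2 * N) :=
    div_nonneg (by positivity) haN.le
  refine le_trans (cfun_concave hx1 hx2 hα hβ (by ring)) (cfun_mono ?_ ?_)
  · have h1 := mul_nonneg hα hx1
    have h2 := mul_nonneg hβ hx2
    linarith
  · exact ct1arg_concave hu1 hv1 hu2 hv2 hα hβ haN

/-- Concavity of `Ct2`. -/
lemma ct2_concave {a N P1h P1v α : ℝ} (hN : 0 < N) (hP1h : 0 ≤ P1h) (hP1v : 0 ≤ P1v)
    (hα : 0 ≤ α) (hβ : 0 ≤ 1 - α) :
    α * Ct2 a N P1h + (1 - α) * Ct2 a N P1v ≤ Ct2 a N (α * P1h + (1 - α) * P1v) := by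
  have hk : (0:ℝ) ≤ max 1 (a ^ 2) := le_trans zero_le_one (le_max_left _ _)
  unfold Ct2
  have he : max 1 (a ^ 2) * (α * P1h + (1 - α) * P1v) / N
      = α * (max 1 (a ^ 2) * P1h / N) + (1 - α) * (max 1 (a ^ 2) * P1v / N) := by ring
  rw [he]
  exact cfun_concave (div_nonneg (mul_nonneg hk hP1h) hN.le)
    (div_nonneg (mul_nonneg hk hP1v) hN.le) hα hβ (by ring)

/-- Lemma 1 of the paper: averaging the powers over an epoch keeps the
point in `Ω`, consumes exactly the same source and relay energies on
`[t^{j-1}, t^j]`, and does not decrease the total number of bits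
`(length) · min{C̃₁, C̃₂}`; hence in an optimal policy the rates and powers
are constant within every energy-harvesting epoch. -/
theorem constant_power_within_epoch (a b N : ℝ) (ha : 1 < a) (hb : 0 < b) (hN : 0 < N)
    (P1h P2h P1v P2v : ℝ)
    (hhat : 0 ≤ P1h ∧ 0 ≤ P2h ∧ b ^ 2 * P2h ≤ a ^ 2 * P1h)
    (hbrv : 0 ≤ P1v ∧ 0 ≤ P2v ∧ b ^ 2 * P2v ≤ a ^ 2 * P1v)
    (tjm tst tj : ℝ) (h1 : tjm < tst) (h2 : tst < tj)
    (α : ℝ) (hα : α = (tst - tjm) / (tj - tjm))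
    (P1bar P2bar : ℝ)
    (hP1bar : P1bar = α * P1h + (1 - α) * P1v)
    (hP2bar : P2bar = α * P2h + (1 - α) * P2v) :
    (0 ≤ P1bar ∧ 0 ≤ P2bar ∧ b ^ 2 * P2bar ≤ a ^ 2 * P1bar) ∧
    ((tst - tjm) * min (Ct1 a b N P1h P2h) (Ct2 a N P1h)
        + (tj - tst) * min (Ct1 a b N P1v P2v) (Ct2 a N P1v)
      ≤ (tj - tjm) * min (Ct1 a b N P1bar P2bar) (Ct2 a N P1bar)) ∧
    ((tst - tjm) * P1h + (tj - tst) * P1v = (tj - tjm) * P1bar) ∧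
    ((tst - tjm) * P2h + (tj - tst) * P2v = (tj - tjm) * P2bar) := by
  obtain ⟨hP1h, hP2h, hΩh⟩ := hhat
  obtain ⟨hP1v, hP2v, hΩv⟩ := hbrv
  have hL : 0 < tj - tjm := by linarith
  have hα0 : 0 < α := by rw [hα]; exact div_pos (by linarith) hL
  have hα1 : α < 1 := by rw [hα]; exact (div_lt_one hL).mpr (by linarith)
  have hβ0 : 0 < 1 - α := by linarith
  have ht1 : tst - tjm = α * (tj - tjm) := by rw [hα]; field_simp
  have ht2 : tj - tst = (1 - α) * (tj - tjm) := by
    have h : (tj - tjm) - (tst - tjm) = tj - tst := by ring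
    rw [← h, ht1]; ring
  refine ⟨⟨?_, ?_, ?_⟩, ?_, ?_, ?_⟩
  · rw [hP1bar]; positivity
  · rw [hP2bar]; positivity
  · rw [hP1bar, hP2bar]; nlinarith
  · -- the rate inequality
    have hCt1 := ct1_concave (N := N) ha hb hN hP2h hP2v hΩh hΩv hα0.le hβ0.le
    have hCt2 := ct2_concave (a := a) hN hP1h hP1v hα0.le hβ0.le
    rw [← hP1bar, ← hP2bar] at hCt1
    rw [← hP1bar] at hCt2
    have hmin : α * min (Ct1 a b N P1h P2h) (Ct2 a N P1h)
        + (1 - α) * min (Ct1 a b N P1v P2v) (Ct2 a N P1v)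
        ≤ min (Ct1 a b N P1bar P2bar) (Ct2 a N P1bar) := by
      apply le_min
      · have ha' := mul_le_mul_of_nonneg_left
          (min_le_left (Ct1 a b N P1h P2h) (Ct2 a N P1h)) hα0.le
        have hb' := mul_le_mul_of_nonneg_left
          (min_le_left (Ct1 a b N P1v P2v) (Ct2 a N P1v)) hβ0.le
        linarith
      · have ha' := mul_le_mul_of_nonneg_left
          (min_le_right (Ct1 a b N P1h P2h) (Ct2 a N P1h)) hα0.le
        have hb' := mul_le_mul_of_nonneg_left
          (min_le_right (Ct1 a b N P1v P2v) (Ct2 a N P1v)) hβ0.le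
        linarith
    rw [ht1, ht2]
    have hfin := mul_le_mul_of_nonneg_left hmin hL.le
    nlinarith [hfin]
  · rw [ht1, ht2, hP1bar]; ring
  · rw [ht1, ht2, hP2bar]; ring
end

section
/- Let D' be any convex subset of Ω = {(P₁,P₂) ∈ ℝ² : P₁ ≥ 0, P₂ ≥ 0, a²P₁ ≥ b²P₂}. Then the set A = {(a₁,a₂) ∈ ℝ² : there exists (P₁,P₂) ∈ D' with a₁ ≤ C̃₁(P₁,P₂) and a₂ ≤ C̃₂(P₁)} is a convex subset of ℝ². -/
/-- auxiliary "H" function: the inside of the log, times `a²N`. -/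
noncomputable def Hfun (a b N P1 P2 : ℝ) : ℝ :=
  a ^ 2 * N + a ^ 2 * P1 + b ^ 2 * (a ^ 2 - 2) * P2 +
    2 * b * Real.sqrt ((a ^ 2 * P1 - b ^ 2 * P2) * ((a ^ 2 - 1) * P2))

/-- Cauchy–Schwarz / concavity of geometric mean. -/
lemma sqrt_mul_concave_aux {x x' y y' s t : ℝ} (hx : 0 ≤ x) (hx' : 0 ≤ x')
    (hy : 0 ≤ y) (hy' : 0 ≤ y') (hs : 0 ≤ s) (ht : 0 ≤ t) :
    s * Real.sqrt (x * y) + t * Real.sqrt (x' * y') ≤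
      Real.sqrt ((s * x + t * x') * (s * y + t * y')) := by
  set u := Real.sqrt x
  set v := Real.sqrt y
  set u' := Real.sqrt x'
  set v' := Real.sqrt y'
  have hu : u ^ 2 = x := Real.sq_sqrt hx
  have hv : v ^ 2 = y := Real.sq_sqrt hy
  have hu' : u' ^ 2 = x' := Real.sq_sqrt hx'
  have hv' : v' ^ 2 = y' := Real.sq_sqrt hy'
  have hun : 0 ≤ u := Real.sqrt_nonneg _
  have hvn : 0 ≤ v := Real.sqrt_nonneg _
  have hun' : 0 ≤ u' := Real.sqrt_nonneg _
  have hvn' : 0 ≤ v' := Real.sqrt_nonneg _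
  have h1 : Real.sqrt (x * y) = u * v := by
    rw [Real.sqrt_mul hx]
  have h2 : Real.sqrt (x' * y') = u' * v' := by
    rw [Real.sqrt_mul hx']
  rw [h1, h2]
  have hnn : 0 ≤ s * (u * v) + t * (u' * v') := by positivity
  rw [show s * (u * v) + t * (u' * v') = s * u * v + t * u' * v' from by ring] at hnn ⊢
  rw [← Real.sqrt_sq hnn]
  apply Real.sqrt_le_sqrt
  rw [← hu, ← hv, ← hu', ← hv']
  nlinarith [mul_nonneg (mul_nonneg hs ht) (sq_nonneg (u * v' - u' * v)),
    sq_nonneg (s * u * v + t * u' * v')]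

/-- concavity-with-slack of log. -/
lemma log_combo {X X' Y s t : ℝ} (hX : 0 < X) (hX' : 0 < X') (hs : 0 ≤ s) (ht : 0 ≤ t)
    (hst : s + t = 1) (hY : s * X + t * X' ≤ Y) :
    s * Real.log X + t * Real.log X' ≤ Real.log Y := by
  have hcomb : (0:ℝ) < s * X + t * X' := by
    rcases eq_or_lt_of_le hs with h | h
    · have ht1 : t = 1 := by linarith
      simp [← h, ht1, hX']
    · have : 0 < s * X := mul_pos h hX
      nlinarith [mul_nonneg ht hX'.le]
  have h1 : s * Real.log X + t * Real.log X' ≤ Real.log (s * X + t * X') := by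
    have hcc : ConcaveOn ℝ (Set.Ioi 0) Real.log := strictConcaveOn_log_Ioi.concaveOn
    have := hcc.2 (Set.mem_Ioi.2 hX) (Set.mem_Ioi.2 hX') hs ht hst
    simpa [smul_eq_mul] using this
  exact h1.trans (Real.log_le_log hcomb hY)

lemma Hfun_pos {a b N P1 P2 : ℝ} (ha : 1 < a) (hb : 0 < b) (hN : 0 < N)
    (hP2 : 0 ≤ P2) (hP : b ^ 2 * P2 ≤ a ^ 2 * P1) : 0 < Hfun a b N P1 P2 := by
  have h1 : 0 ≤ Real.sqrt ((a ^ 2 * P1 - b ^ 2 * P2) * ((a ^ 2 - 1) * P2)) :=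
    Real.sqrt_nonneg _
  have ha2 : 1 < a ^ 2 := by nlinarith
  have : a ^ 2 * P1 + b ^ 2 * (a ^ 2 - 2) * P2 =
      (a ^ 2 * P1 - b ^ 2 * P2) + b ^ 2 * (a ^ 2 - 1) * P2 := by ring
  unfold Hfun
  nlinarith [mul_nonneg (mul_nonneg (sq_nonneg b) (by nlinarith : (0:ℝ) ≤ a ^ 2 - 1)) hP2,
    mul_pos (by positivity : (0:ℝ) < a ^ 2) hN, mul_nonneg hb.le h1]

/-- On the domain, `Ct1` equals `(log H − log(a²N))/2`. -/
lemma Ct1_eq {a b N P1 P2 : ℝ} (ha : 1 < a) (hb : 0 < b) (hN : 0 < N)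
    (hP2 : 0 ≤ P2) (hP : b ^ 2 * P2 ≤ a ^ 2 * P1) :
    Ct1 a b N P1 P2 = (Real.log (Hfun a b N P1 P2) - Real.log (a ^ 2 * N)) / 2 := by
  have hu : (0:ℝ) ≤ a ^ 2 * P1 - b ^ 2 * P2 := by linarith
  have hv : (0:ℝ) ≤ (a ^ 2 - 1) * P2 := mul_nonneg (by nlinarith [sq_nonneg (a-1)]) hP2
  have hc : (0:ℝ) < a ^ 2 * N := by positivity
  have hsq : (Real.sqrt (a ^ 2 * P1 - b ^ 2 * P2) + b * Real.sqrt ((a ^ 2 - 1) * P2)) ^ 2 =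
      (a ^ 2 * P1 - b ^ 2 * P2) + b ^ 2 * ((a ^ 2 - 1) * P2) +
        2 * b * Real.sqrt ((a ^ 2 * P1 - b ^ 2 * P2) * ((a ^ 2 - 1) * P2)) := by
    rw [Real.sqrt_mul hu]
    have h1 := Real.sq_sqrt hu
    have h2 := Real.sq_sqrt hv
    nlinarith [h1, h2]
  have harg : 1 + (Real.sqrt (a ^ 2 * P1 - b ^ 2 * P2) +
      b * Real.sqrt ((a ^ 2 - 1) * P2)) ^ 2 / (a ^ 2 * N) =
      Hfun a b N P1 P2 / (a ^ 2 * N) := by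
    rw [hsq]
    unfold Hfun
    field_simp
    ring
  unfold Ct1 Cfun
  rw [harg, Real.log_div (Hfun_pos ha hb hN hP2 hP).ne' hc.ne']

/-- Concavity of `Ct1` on the domain. -/
lemma Ct1_concave {a b N : ℝ} (ha : 1 < a) (hb : 0 < b) (hN : 0 < N)
    {P1 P2 Q1 Q2 s t : ℝ} (hs : 0 ≤ s) (ht : 0 ≤ t) (hst : s + t = 1)
    (hP2 : 0 ≤ P2) (hP : b ^ 2 * P2 ≤ a ^ 2 * P1)
    (hQ2 : 0 ≤ Q2) (hQ : b ^ 2 * Q2 ≤ a ^ 2 * Q1) :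
    s * Ct1 a b N P1 P2 + t * Ct1 a b N Q1 Q2 ≤
      Ct1 a b N (s * P1 + t * Q1) (s * P2 + t * Q2) := by
  have hR2 : 0 ≤ s * P2 + t * Q2 := by positivity
  have hR : b ^ 2 * (s * P2 + t * Q2) ≤ a ^ 2 * (s * P1 + t * Q1) := by nlinarith
  rw [Ct1_eq ha hb hN hP2 hP, Ct1_eq ha hb hN hQ2 hQ, Ct1_eq ha hb hN hR2 hR]
  have hHcomb : s * Hfun a b N P1 P2 + t * Hfun a b N Q1 Q2 ≤
      Hfun a b N (s * P1 + t * Q1) (s * P2 + t * Q2) := by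
    unfold Hfun
    have hcs := sqrt_mul_concave_aux (x := a ^ 2 * P1 - b ^ 2 * P2)
      (x' := a ^ 2 * Q1 - b ^ 2 * Q2) (y := (a ^ 2 - 1) * P2) (y' := (a ^ 2 - 1) * Q2)
      (by linarith) (by linarith) (mul_nonneg (by nlinarith [sq_nonneg (a-1)]) hP2) (mul_nonneg (by nlinarith [sq_nonneg (a-1)]) hQ2) hs ht
    have he1 : s * (a ^ 2 * P1 - b ^ 2 * P2) + t * (a ^ 2 * Q1 - b ^ 2 * Q2) =
        a ^ 2 * (s * P1 + t * Q1) - b ^ 2 * (s * P2 + t * Q2) := by ring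
    have he2 : s * ((a ^ 2 - 1) * P2) + t * ((a ^ 2 - 1) * Q2) =
        (a ^ 2 - 1) * (s * P2 + t * Q2) := by ring
    rw [he1, he2] at hcs
    have h2b : (0:ℝ) ≤ 2 * b := by positivity
    have hmul := mul_le_mul_of_nonneg_left hcs h2b
    have hlin : s * (a ^ 2 * N) + t * (a ^ 2 * N) = a ^ 2 * N := by
      rw [← add_mul, hst, one_mul]
    nlinarith [hmul, hlin]
  have hlog := log_combo (Hfun_pos ha hb hN hP2 hP) (Hfun_pos ha hb hN hQ2 hQ)
    hs ht hst hHcomb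
  have hlc : s * Real.log (a ^ 2 * N) + t * Real.log (a ^ 2 * N) = Real.log (a ^ 2 * N) := by
    rw [← add_mul, hst, one_mul]
  linarith
  
/-- Concavity of `Ct2` on the domain. -/
lemma Ct2_concave {a N : ℝ} (ha : 1 < a) (hN : 0 < N)
    {P1 Q1 s t : ℝ} (hs : 0 ≤ s) (ht : 0 ≤ t) (hst : s + t = 1)
    (hP1 : 0 ≤ P1) (hQ1 : 0 ≤ Q1) :
    s * Ct2 a N P1 + t * Ct2 a N Q1 ≤ Ct2 a N (s * P1 + t * Q1) := by
  unfold Ct2 Cfun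
  set m := max 1 (a ^ 2) with hm
  have hm0 : (0:ℝ) < m := lt_of_lt_of_le one_pos (le_max_left _ _)
  have hX : (0:ℝ) < 1 + m * P1 / N := by positivity
  have hX' : (0:ℝ) < 1 + m * Q1 / N := by positivity
  have hY : s * (1 + m * P1 / N) + t * (1 + m * Q1 / N) ≤
      1 + m * (s * P1 + t * Q1) / N := by
    have heq : s * (1 + m * P1 / N) + t * (1 + m * Q1 / N) =
        (s + t) + m * (s * P1 + t * Q1) / N := by ring
    rw [heq, hst]
  have := log_combo hX hX' hs ht hst hY
  linarith

/-- Convexity of the set `A` (hypothesis of the Terkelsen minimax corollary in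
the proof of Theorem 1 of the paper, Gaussian case): for any convex subset `D'`
of `Ω = {(P₁,P₂) : P₁ ≥ 0, P₂ ≥ 0, a²P₁ ≥ b²P₂}`, the set
`A = {(a₁,a₂) : ∃ (P₁,P₂) ∈ D', a₁ ≤ C̃₁(P₁,P₂) ∧ a₂ ≤ C̃₂(P₁)}` is convex. -/
theorem A_convex (a b N : ℝ) (ha : 1 < a) (hb : 0 < b) (hN : 0 < N)
    (D' : Set (ℝ × ℝ))
    (hD'sub : D' ⊆ {p : ℝ × ℝ | 0 ≤ p.1 ∧ 0 ≤ p.2 ∧ b ^ 2 * p.2 ≤ a ^ 2 * p.1})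
    (hD'conv : Convex ℝ D') :
    Convex ℝ {q : ℝ × ℝ | ∃ p ∈ D', q.1 ≤ Ct1 a b N p.1 p.2 ∧ q.2 ≤ Ct2 a N p.1} := by
  intro q hq q' hq' s t hs ht hst
  obtain ⟨p, hpD, hq1, hq2⟩ := hq
  obtain ⟨p', hpD', hq1', hq2'⟩ := hq'
  obtain ⟨hp1, hp2, hpΩ⟩ := hD'sub hpD
  obtain ⟨hp1', hp2', hpΩ'⟩ := hD'sub hpD'
  refine ⟨s • p + t • p', hD'conv hpD hpD' hs ht hst, ?_, ?_⟩
  · have h1 : (s • q + t • q').1 = s * q.1 + t * q'.1 := rfl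
    have h2 : (s • p + t • p').1 = s * p.1 + t * p'.1 := rfl
    have h3 : (s • p + t • p').2 = s * p.2 + t * p'.2 := rfl
    rw [h1, h2, h3]
    calc s * q.1 + t * q'.1 ≤ s * Ct1 a b N p.1 p.2 + t * Ct1 a b N p'.1 p'.2 := by
          gcongr
      _ ≤ _ := Ct1_concave ha hb hN hs ht hst hp2 hpΩ hp2' hpΩ'
  · have h1 : (s • q + t • q').2 = s * q.2 + t * q'.2 := rfl
    have h2 : (s • p + t • p').1 = s * p.1 + t * p'.1 := rfl
    rw [h1, h2]
    calc s * q.2 + t * q'.2 ≤ s * Ct2 a N p.1 + t * Ct2 a N p'.1 := by gcongr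
      _ ≤ _ := Ct2_concave ha hN hs ht hst hp1 hp1'
end
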